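/- arXiv:2302.02256 — 2 statements merged into one kernel-verified Lean document; each statement's English description precedes it below -/
import Mathlib

section
/- Let ζ₁, ζ₂, χ, κ, ν be real numbers and 0 < R < 1. Then for all (v₁,v₂,u₁,u₂) ∈ ℝ⁴, ℒ(v₁(v₂ − R u₂ sin u₁)) = v₂² − R v₂ u₂ sin u₁ − 2ζ₁ v₁ v₂ − χ² v₁². -/
/-- The generator `ℒ` of the block-and-pendulum stochastic system, acting on a
twice continuously differentiable function `G : ℝ⁴ → ℝ` of `(v₁, v₂, u₁, u₂)`. -/
noncomputable def genL (ζ₁ ζ₂ χ κ ν R : ℝ) (G : ℝ → ℝ → ℝ → ℝ → ℝ)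
    (v₁ v₂ u₁ u₂ : ℝ) : ℝ :=
  v₂ * deriv (fun x => G x v₂ u₁ u₂) v₁
    + ((-(2 * ζ₁ * v₂) - χ ^ 2 * v₁ + R * u₂ ^ 2 * Real.cos u₁
          - 2 * R * ζ₂ * u₂ * Real.sin u₁ - R * κ ^ 2 * Real.sin u₁ ^ 2)
        / (1 - R * Real.sin u₁ ^ 2))
      * deriv (fun x => G v₁ x u₁ u₂) v₂
    + u₂ * deriv (fun x => G v₁ v₂ x u₂) u₁
    + ((-(2 * ζ₂ * u₂) - κ ^ 2 * Real.sin u₁ - 2 * ζ₁ * v₂ * Real.sin u₁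
          - χ ^ 2 * v₁ * Real.sin u₁ + R * u₂ ^ 2 * Real.sin u₁ * Real.cos u₁)
        / (1 - R * Real.sin u₁ ^ 2))
      * deriv (fun x => G v₁ v₂ u₁ x) u₂
    + (ν ^ 2 / (2 * (1 - R * Real.sin u₁ ^ 2) ^ 2))
      * (deriv (fun x => deriv (fun y => G v₁ y u₁ u₂) x) v₂
          + 2 * Real.sin u₁ * deriv (fun x => deriv (fun y => G v₁ x u₁ y) u₂) v₂
          + Real.sin u₁ ^ 2 * deriv (fun x => deriv (fun y => G v₁ v₂ u₁ y) x) u₂)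

/-! The test function `v₁ (v₂ - R u₂ sin u₁)` is affine in `(v₂, u₂)`, so the diffusion part of `ℒ`
vanishes, and its `v₂`- and `u₂`-derivatives are `v₁` and `-R v₁ sin u₁`. The two drifts therefore
enter only as the drift of `v₂` minus `R sin u₁` times the drift of `u₂`, in which the denominator
`1 - R sin² u₁` cancels. -/

open Real

theorem one_sub_mul_sin_sq_pos {R : ℝ} (hR : R < 1) (u : ℝ) : 0 < 1 - R * sin u ^ 2 := by
  rcases le_or_gt R 0 with hR0 | hR0
  · nlinarith [sq_nonneg (sin u)]
  · nlinarith [sin_sq_le_one u]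

section CrossPartials

variable (R v₁ v₂ u₁ u₂ : ℝ)

theorem deriv_cross_v₁ :
    deriv (fun x => x * (v₂ - R * u₂ * sin u₁)) v₁ = v₂ - R * u₂ * sin u₁ := by
  simp

theorem deriv_cross_v₂ :
    deriv (fun x => v₁ * (x - R * u₂ * sin u₁)) = fun _ => v₁ := by
  funext x
  simp

theorem deriv_cross_u₁ :
    deriv (fun x => v₁ * (v₂ - R * u₂ * sin x)) u₁ = -(R * v₁ * u₂ * cos u₁) := by
  simp only [deriv_const_mul_field', deriv_const_sub', Real.deriv_sin]
  ring

theorem deriv_cross_u₂ :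
    deriv (fun x => v₁ * (v₂ - R * x * sin u₁)) = fun _ => -(R * v₁ * sin u₁) := by
  funext x
  simp only [deriv_const_mul_field', deriv_const_sub', deriv_mul_const_field', deriv_const_mul_id']
  ring

end CrossPartials

/-- In the numerator of the left side the `ζ₂`- and `κ`-terms cancel, and what remains is a multiple
of `1 - R sin² u₁`. -/
theorem drift_v₂_sub_mul_drift_u₂ (ζ₁ ζ₂ χ κ R v₁ v₂ u₁ u₂ : ℝ) (hR : R < 1) :
    (-(2 * ζ₁ * v₂) - χ ^ 2 * v₁ + R * u₂ ^ 2 * cos u₁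
          - 2 * R * ζ₂ * u₂ * sin u₁ - R * κ ^ 2 * sin u₁ ^ 2) / (1 - R * sin u₁ ^ 2)
      - R * sin u₁ * ((-(2 * ζ₂ * u₂) - κ ^ 2 * sin u₁ - 2 * ζ₁ * v₂ * sin u₁
          - χ ^ 2 * v₁ * sin u₁ + R * u₂ ^ 2 * sin u₁ * cos u₁) / (1 - R * sin u₁ ^ 2))
      = -(2 * ζ₁ * v₂) - χ ^ 2 * v₁ + R * u₂ ^ 2 * cos u₁ := by
  have hD := (one_sub_mul_sin_sq_pos hR u₁).ne'
  field_simp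
  ring

theorem genL_cross_general (ζ₁ ζ₂ χ κ ν R : ℝ) (hR1 : R < 1) :
    ∀ v₁ v₂ u₁ u₂ : ℝ,
      genL ζ₁ ζ₂ χ κ ν R
        (fun v₁ v₂ u₁ u₂ => v₁ * (v₂ - R * u₂ * Real.sin u₁)) v₁ v₂ u₁ u₂
      = v₂ ^ 2 - R * v₂ * u₂ * Real.sin u₁ - 2 * ζ₁ * v₁ * v₂ - χ ^ 2 * v₁ ^ 2 := by
  intro v₁ v₂ u₁ u₂
  simp only [genL, deriv_cross_v₁, deriv_cross_v₂, deriv_cross_u₁, deriv_cross_u₂, deriv_const]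
  linear_combination v₁ * drift_v₂_sub_mul_drift_u₂ ζ₁ ζ₂ χ κ R v₁ v₂ u₁ u₂ hR1

/-- `ℒ(v₁(v₂ − R u₂ sin u₁)) = v₂² − R v₂ u₂ sin u₁ − 2ζ₁ v₁ v₂ − χ² v₁²`. -/
theorem genL_cross (ζ₁ ζ₂ χ κ ν R : ℝ) (hR0 : 0 < R) (hR1 : R < 1) :
    ∀ v₁ v₂ u₁ u₂ : ℝ,
      genL ζ₁ ζ₂ χ κ ν R
        (fun v₁ v₂ u₁ u₂ => v₁ * (v₂ - R * u₂ * Real.sin u₁)) v₁ v₂ u₁ u₂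
      = v₂ ^ 2 - R * v₂ * u₂ * Real.sin u₁ - 2 * ζ₁ * v₁ * v₂ - χ ^ 2 * v₁ ^ 2 :=
  genL_cross_general ζ₁ ζ₂ χ κ ν R hR1
end

section
/- Let A be a real d×d Hurwitz matrix (all eigenvalues of A have strictly negative real part) and ω ∈ ℝ. Then the matrix A − iωI_d (viewed as a complex d×d matrix) is invertible, and Ŝ_A(ω) = −(1/π) Re((A − iωI_d)^{−1}), where Re denotes the entrywise real part. -/
open MeasureTheory
open scoped Matrix

/-- The matrix-valued cosine transform `Ŝ_A(ω) = (1/π)∫₀^∞ e^{tA} cos ωt dt`,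
defined entrywise. -/
noncomputable def cosTransform {d : ℕ} (A : Matrix (Fin d) (Fin d) ℝ) (ω : ℝ) :
    Matrix (Fin d) (Fin d) ℝ :=
  Matrix.of fun i j => (1 / Real.pi) * ∫ t in Set.Ioi (0 : ℝ),
    Real.cos (ω * t) * (NormedSpace.exp (t • A)) i j

/-!
Put `B = A − iωI`. Its spectrum is that of `A` shifted by `−iω`, so it lies in the open left
half-plane; in particular `0 ∉ σ(B)`. Since `σ(e^B) ⊆ exp(σ(B))` lies in the open unit disc,
Gelfand's formula gives `‖e^{kB}‖ < 1` for some `k ≥ 1`, and the semigroup property turns this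
into a bound `‖e^{tB}‖ ≤ C e^{-εt}`. Hence `t ↦ B⁻¹ e^{tB}` is an antiderivative of `e^{tB}`
vanishing at infinity, so `∫₀^∞ e^{tB} dt = −B⁻¹`. Finally `e^{tB} = e^{−iωt} e^{tA}` with
`e^{tA}` real, so the real part of each entry of `e^{tB}` is `cos(ωt)` times that of `e^{tA}`.
-/

open NormedSpace Filter Topology

lemma pow_floor_div_le {ρ : ℝ} (hρ0 : 0 < ρ) (hρ1 : ρ < 1) (T t : ℝ) :
    ρ ^ ⌊t / T⌋₊ ≤ ρ⁻¹ * Real.exp (Real.log ρ / T * t) := by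
  have hn : t / T - 1 ≤ ⌊t / T⌋₊ := by linarith [Nat.lt_floor_add_one (t / T)]
  calc ρ ^ ⌊t / T⌋₊ = Real.exp (⌊t / T⌋₊ * Real.log ρ) := by
        rw [Real.exp_nat_mul, Real.exp_log hρ0]
    _ ≤ Real.exp ((t / T - 1) * Real.log ρ) :=
        Real.exp_le_exp.2 (mul_le_mul_of_nonpos_right hn (Real.log_nonpos hρ0.le hρ1.le))
    _ = ρ⁻¹ * Real.exp (Real.log ρ / T * t) := by
        rw [← Real.exp_log hρ0, ← Real.exp_neg, ← Real.exp_add, Real.log_exp]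
        ring_nf

section ExpSmul

variable {𝔸 : Type*} [NormedRing 𝔸] [NormedAlgebra ℝ 𝔸] [CompleteSpace 𝔸]

lemma exp_smul_eq_exp_smul_pow_mul (b : 𝔸) (T t : ℝ) :
    exp (t • b) = exp (T • b) ^ ⌊t / T⌋₊ * exp ((t - ⌊t / T⌋₊ * T) • b) := by
  let : NormedAlgebra ℚ 𝔸 := .restrictScalars ℚ ℝ 𝔸
  have hsplit : t • b = ⌊t / T⌋₊ • (T • b) + (t - ⌊t / T⌋₊ * T) • b := by
    rw [← Nat.cast_smul_eq_nsmul ℝ, smul_smul, ← add_smul]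
    ring_nf
  rw [← exp_nsmul, ← exp_add_of_commute ((Commute.refl b).smul_left T |>.smul_left _
    |>.smul_right _), ← hsplit]

theorem exists_norm_exp_smul_le_of_norm_exp_smul_lt_one {b : 𝔸} {T : ℝ} (hT : 0 < T)
    (hb : ‖exp (T • b)‖ < 1) :
    ∃ C ε : ℝ, 0 < ε ∧ ∀ t : ℝ, 0 ≤ t → ‖exp (t • b)‖ ≤ C * Real.exp (-ε * t) := by
  let : NormedAlgebra ℚ 𝔸 := .restrictScalars ℚ ℝ 𝔸
  set q := ‖exp (T • b)‖
  -- any rate in `(q, 1)` works; it has to be positive even when `q = 0`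
  set ρ := (1 + q) / 2
  have hq : 0 ≤ q := norm_nonneg _
  have hρ0 : 0 < ρ := by positivity
  have hρ1 : ρ < 1 := by simp only [ρ]; linarith
  have hcont : Continuous fun s : ℝ => exp (s • b) :=
    exp_continuous.comp (continuous_id.smul continuous_const)
  obtain ⟨M, hM⟩ := (isCompact_Icc (a := 0) (b := T)).exists_bound_of_continuousOn
    hcont.continuousOn
  have hM0 : 0 ≤ M := (norm_nonneg _).trans (hM 0 ⟨le_rfl, hT.le⟩)
  refine ⟨ρ⁻¹ * M, -(Real.log ρ / T), neg_pos.2 (div_neg_of_neg_of_pos (Real.log_neg hρ0 hρ1) hT),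
    fun t ht => ?_⟩
  have hs : t - ⌊t / T⌋₊ * T ∈ Set.Icc 0 T := by
    have h1 := Nat.floor_le (div_nonneg ht hT.le)
    have h2 := Nat.lt_floor_add_one (t / T)
    rw [le_div_iff₀ hT] at h1
    rw [div_lt_iff₀ hT] at h2
    constructor <;> nlinarith
  calc ‖exp (t • b)‖ ≤ q ^ ⌊t / T⌋₊ * M := by
        rw [exp_smul_eq_exp_smul_pow_mul b T t]
        rcases (⌊t / T⌋₊).eq_zero_or_pos with h0 | hpos
        · simpa [h0] using hM _ hs
        · exact (norm_mul_le _ _).trans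
            (mul_le_mul (norm_pow_le' _ hpos) (hM _ hs) (norm_nonneg _) (by positivity))
    _ ≤ ρ ^ ⌊t / T⌋₊ * M := by gcongr; simp only [ρ]; linarith
    _ ≤ ρ⁻¹ * Real.exp (Real.log ρ / T * t) * M := by gcongr; exact pow_floor_div_le hρ0 hρ1 T t
    _ = ρ⁻¹ * M * Real.exp (-(-(Real.log ρ / T)) * t) := by ring_nf

theorem integrableOn_exp_smul_Ioi_of_norm_le {b : 𝔸} {C ε : ℝ} (hε : 0 < ε)
    (h : ∀ t : ℝ, 0 ≤ t → ‖exp (t • b)‖ ≤ C * Real.exp (-ε * t)) :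
    IntegrableOn (fun t : ℝ => exp (t • b)) (Set.Ioi 0) := by
  let : NormedAlgebra ℚ 𝔸 := .restrictScalars ℚ ℝ 𝔸
  refine Integrable.mono' ((exp_neg_integrableOn_Ioi 0 hε).const_mul C)
    (exp_continuous.comp (continuous_id.smul continuous_const)).aestronglyMeasurable ?_
  filter_upwards [ae_restrict_mem measurableSet_Ioi] with t ht
  exact h t ht.le

theorem integral_exp_smul_Ioi_of_norm_le (u : 𝔸ˣ) {C ε : ℝ} (hε : 0 < ε)
    (h : ∀ t : ℝ, 0 ≤ t → ‖exp (t • (u : 𝔸))‖ ≤ C * Real.exp (-ε * t)) :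
    ∫ t in Set.Ioi (0 : ℝ), exp (t • (u : 𝔸)) = -↑u⁻¹ := by
  let : NormedAlgebra ℚ 𝔸 := .restrictScalars ℚ ℝ 𝔸
  have hlim : Tendsto (fun t : ℝ => exp (t • (u : 𝔸))) atTop (𝓝 0) := by
    have hbound : Tendsto (fun t : ℝ => C * Real.exp (-ε * t)) atTop (𝓝 0) := by
      simpa using (Real.tendsto_exp_atBot.comp
        (tendsto_id.const_mul_atTop_of_neg (neg_lt_zero.2 hε))).const_mul C
    exact squeeze_zero_norm' (eventually_ge_atTop 0 |>.mono h) hbound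
  have hderiv (t : ℝ) :
      HasDerivAt (fun s : ℝ => ↑u⁻¹ * exp (s • (u : 𝔸))) (exp (t • (u : 𝔸))) t := by
    simpa [← mul_assoc] using
      (hasDerivAt_exp_smul_const' (𝕂 := ℝ) (u : 𝔸) t).const_mul (↑u⁻¹ : 𝔸)
  rw [integral_Ioi_of_hasDerivAt_of_tendsto (hderiv 0).continuousAt.continuousWithinAt
    (fun t _ => hderiv t) (integrableOn_exp_smul_Ioi_of_norm_le hε h)
    (by simpa using hlim.const_mul (↑u⁻¹ : 𝔸))]
  simp

end ExpSmul

theorem exists_norm_pow_lt_one_of_spectralRadius_lt_one {A : Type*} [NormedRing A]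
    [NormedAlgebra ℂ A] [CompleteSpace A] {a : A} (ha : spectralRadius ℂ a < 1) :
    ∃ n : ℕ, 0 < n ∧ ‖a ^ n‖ < 1 := by
  obtain ⟨n, hn, hlt⟩ := ((eventually_gt_atTop 0).and
    ((spectrum.pow_norm_pow_one_div_tendsto_nhds_spectralRadius a).eventually_lt_const ha)).exists
  refine ⟨n, hn, ?_⟩
  by_contra! h
  exact (ENNReal.ofReal_lt_one.1 hlt).not_ge (Real.one_le_rpow h (by positivity))

theorem exp_mem_adjoin_singleton {𝕂 A : Type*} [RCLike 𝕂] [NormedRing A] [NormedAlgebra 𝕂 A]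
    [CompleteSpace A] [FiniteDimensional 𝕂 A] (a : A) : exp a ∈ Algebra.adjoin 𝕂 {a} :=
  let : NormedAlgebra ℚ A := .restrictScalars ℚ 𝕂 A
  exp_mem (R := 𝕂) (s := Algebra.adjoin 𝕂 {a})
    (Algebra.adjoin 𝕂 {a}).toSubmodule.closed_of_finiteDimensional
    (Algebra.self_mem_adjoin_singleton 𝕂 a)

theorem isUnit_of_forall_spectrum_re_neg {A : Type*} [Ring A] [Algebra ℂ A] {a : A}
    (ha : ∀ μ ∈ spectrum ℂ a, μ.re < 0) : IsUnit a :=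
  (spectrum.zero_notMem_iff ℂ).1 fun h => by simpa using ha 0 h

namespace Matrix

open scoped Matrix.Norms.Operator

variable {n : Type*} [Fintype n] [DecidableEq n]

theorem exp_mulVec_of_hasEigenvector {B : Matrix n n ℂ} {μ : ℂ} {v : n → ℂ}
    (hv : Module.End.HasEigenvector (toLin' B) μ v) : exp B *ᵥ v = Complex.exp μ • v := by
  have hterm (k : ℕ) :
      ((k.factorial⁻¹ : ℂ) • B ^ k) *ᵥ v = ((k.factorial⁻¹ : ℂ) * μ ^ k) • v := by
    rw [smul_mulVec, ← toLin'_apply, toLin'_pow, hv.pow_apply, smul_smul]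
  have hB := (exp_series_hasSum_exp' (𝕂 := ℂ) B).map (mulVec.addMonoidHomLeft v)
    (continuous_id.matrix_mulVec continuous_const)
  have hμ := (exp_series_hasSum_exp' (𝕂 := ℂ) μ).smul_const v
  rw [← Complex.exp_eq_exp_ℂ] at hμ
  refine hB.unique ?_
  simpa [Function.comp_def, mulVec.addMonoidHomLeft, hterm, smul_eq_mul] using hμ

/-- `e^B` is a polynomial `p(B)`, so `σ(e^B) = p(σ(B))`, and an eigenvector of `B` for `μ`
shows `p(μ) = e^μ`. -/
theorem spectrum_exp_subset [Nonempty n] (B : Matrix n n ℂ) :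
    spectrum ℂ (exp B) ⊆ Complex.exp '' spectrum ℂ B := by
  obtain ⟨p, hp⟩ : ∃ p : Polynomial ℂ, Polynomial.aeval B p = exp B := by
    rw [← AlgHom.mem_range, ← Algebra.adjoin_singleton_eq_range_aeval]
    exact exp_mem_adjoin_singleton B
  rw [← hp, spectrum.map_polynomial_aeval]
  rintro _ ⟨μ, hμ, rfl⟩
  obtain ⟨v, hv⟩ := (Module.End.HasEigenvalue.of_mem_spectrum
    (f := toLin' B) ((spectrum_toLin' B).symm ▸ hμ)).exists_hasEigenvector
  refine ⟨μ, hμ, smul_left_injective ℂ hv.2 ?_⟩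
  calc Complex.exp μ • v = exp B *ᵥ v := (exp_mulVec_of_hasEigenvector hv).symm
    _ = Polynomial.aeval (toLin' B) p v := by
        rw [← hp, ← toLin'_apply]
        show toLinAlgEquiv' (Polynomial.aeval B p) v = Polynomial.aeval (toLinAlgEquiv' B) p v
        rw [Polynomial.aeval_algHom_apply]
    _ = p.eval μ • v := Module.End.aeval_apply_of_hasEigenvector hv

theorem exists_norm_exp_smul_le_of_re_neg [Nonempty n] {B : Matrix n n ℂ}
    (hB : ∀ μ ∈ spectrum ℂ B, μ.re < 0) :
    ∃ C ε : ℝ, 0 < ε ∧ ∀ t : ℝ, 0 ≤ t → ‖exp (t • B)‖ ≤ C * Real.exp (-ε * t) := by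
  have hρ : spectralRadius ℂ (exp B) < 1 :=
    spectrum.spectralRadius_lt_of_forall_lt _ fun z hz => by
      obtain ⟨μ, hμ, rfl⟩ := spectrum_exp_subset B hz
      rw [← NNReal.coe_lt_coe, coe_nnnorm, Complex.norm_exp]
      simpa using hB μ hμ
  obtain ⟨k, hk, hlt⟩ := exists_norm_pow_lt_one_of_spectralRadius_lt_one hρ
  refine exists_norm_exp_smul_le_of_norm_exp_smul_lt_one (T := k) (by positivity) ?_
  rwa [← exp_nsmul, ← Nat.cast_smul_eq_nsmul ℝ] at hlt

theorem integral_re_exp_smul_apply {B : Matrix n n ℂ} (hB : ∀ μ ∈ spectrum ℂ B, μ.re < 0)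
    (i j : n) : ∫ t in Set.Ioi (0 : ℝ), (exp (t • B) i j).re = -(B⁻¹ i j).re := by
  have : Nonempty n := ⟨i⟩
  obtain ⟨C, ε, hε, hdecay⟩ := exists_norm_exp_smul_le_of_re_neg hB
  lift B to (Matrix n n ℂ)ˣ using isUnit_of_forall_spectrum_re_neg hB
  let entryRe : Matrix n n ℂ →L[ℝ] ℝ :=
    Complex.reCLM.comp (LinearMap.toContinuousLinearMap (entryLinearMap ℝ ℂ i j))
  have hint : ∫ t in Set.Ioi (0 : ℝ), exp (t • (B : Matrix n n ℂ)) = -↑B⁻¹ :=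
    integral_exp_smul_Ioi_of_norm_le B hε hdecay
  calc ∫ t in Set.Ioi (0 : ℝ), (exp (t • (B : Matrix n n ℂ)) i j).re
      = ∫ t in Set.Ioi (0 : ℝ), entryRe (exp (t • (B : Matrix n n ℂ))) := rfl
    _ = entryRe (∫ t in Set.Ioi (0 : ℝ), exp (t • (B : Matrix n n ℂ))) :=
        entryRe.integral_comp_comm (integrableOn_exp_smul_Ioi_of_norm_le hε hdecay)
    _ = -((B : Matrix n n ℂ)⁻¹ i j).re := by
        rw [hint, coe_units_inv]
        simp [entryRe]

theorem exp_add_smul_one (M : Matrix n n ℂ) (c : ℂ) :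
    exp (M + c • 1) = Complex.exp c • exp M := by
  rw [← Algebra.algebraMap_eq_smul_one, exp_add_of_commute _ _ (Algebra.commutes c M).symm]
  -- `erw`: the matrix `exp` here is taken for the product topology, not the operator norm one
  erw [← algebraMap_exp_comm c]
  rw [← Complex.exp_eq_exp_ℂ, ← Algebra.commutes, ← Algebra.smul_def]

theorem exp_map_ofReal (A : Matrix n n ℝ) :
    exp (A.map Complex.ofReal) = (exp A).map Complex.ofReal :=
  (map_exp Complex.ofRealHom.mapMatrix (continuous_id.matrix_map Complex.continuous_ofReal) A).symm

theorem re_exp_smul_sub_smul_one_apply (A : Matrix n n ℝ) (ω t : ℝ) (i j : n) :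
    (exp (t • (A.map Complex.ofReal - (Complex.I * ω) • 1)) i j).re
      = Real.cos (ω * t) * exp (t • A) i j := by
  have hsplit : t • (A.map Complex.ofReal - (Complex.I * ω) • 1)
      = (t • A).map Complex.ofReal + (-(Complex.I * ω * t)) • (1 : Matrix n n ℂ) := by
    ext k l
    simp only [smul_apply, sub_apply, add_apply, map_apply, one_apply, smul_eq_mul,
      Complex.real_smul, Complex.ofReal_mul]
    split_ifs <;> ring
  rw [hsplit, exp_add_smul_one, exp_map_ofReal]
  simp [Complex.exp_re]

end Matrix

/-- For a Hurwitz matrix `A` and `ω ∈ ℝ`, the complex matrix `A − iωI` is invertible and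
`Ŝ_A(ω) = −(1/π) Re((A − iωI)⁻¹)` entrywise. -/
theorem cosTransform_eq_re_resolvent {d : ℕ}
    (A : Matrix (Fin d) (Fin d) ℝ) (ω : ℝ)
    (hA : ∀ μ ∈ spectrum ℂ (A.map Complex.ofReal), μ.re < 0) :
    IsUnit (A.map Complex.ofReal - (Complex.I * ω) • (1 : Matrix (Fin d) (Fin d) ℂ))
    ∧ ∀ i j, cosTransform A ω i j
        = -(1 / Real.pi) *
          (((A.map Complex.ofReal - (Complex.I * ω) • (1 : Matrix (Fin d) (Fin d) ℂ))⁻¹)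
            i j).re := by
  have hspec : ∀ μ ∈ spectrum ℂ
      (A.map Complex.ofReal - (Complex.I * ω) • (1 : Matrix (Fin d) (Fin d) ℂ)), μ.re < 0 := by
    rintro μ hμ
    rw [← Algebra.algebraMap_eq_smul_one, ← spectrum.sub_singleton_eq] at hμ
    obtain ⟨ν, hν, _, rfl, rfl⟩ := hμ
    simpa using hA ν hν
  refine ⟨isUnit_of_forall_spectrum_re_neg hspec, fun i j => ?_⟩
  rw [cosTransform, Matrix.of_apply]
  simp_rw [← Matrix.re_exp_smul_sub_smul_one_apply]
  rw [Matrix.integral_re_exp_smul_apply hspec]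
  ring
end
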